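/- arXiv:2411.06941 — 4 statements merged into one kernel-verified Lean document; each statement's English description precedes it below -/
import Mathlib

section
/- For every finite simple graph G on n ≥ 1 vertices with at least one edge and every integer d ≥ 0, the d-improper chromatic number satisfies χ^d(G) ≥ (λ₁ − λₙ)/(d − λₙ) = 1 − (λ₁ − d)/(λₙ − d). (Note that having an edge forces λₙ ≤ −1 < 0 ≤ d, so d − λₙ > 0.) -/
/-!
Let `x` be an eigenvector for `λ₁`, let `c` be a `d`-improper colouring with `k` colours, and let
`yᵢ` be the restriction of `x` to the `i`-th colour class, so that `x = ∑ᵢ yᵢ` orthogonally. Since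
each class induces maximum degree at most `d`, `yᵢᵀ A yᵢ ≤ d ‖yᵢ‖²`. Applying the Rayleigh bound
`zᵀ A z ≥ λₙ ‖z‖²` to Hoffman's vectors `zᵢ = x - k yᵢ` and summing over `i` gives
`λₙ (k² - k) ‖x‖² ≤ (k² d - k λ₁) ‖x‖²`, that is `λ₁ - λₙ ≤ k (d - λₙ)`. An edge `ab` gives
`λₙ ≤ -1` through the test vector `e_a - e_b`, so `d - λₙ > 0`.
-/

open SimpleGraph Finset Matrix

namespace ImproperPaper

variable {V W : Type*}

/-- The strong product of two simple graphs. -/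
def strongProd (G : SimpleGraph V) (H : SimpleGraph W) : SimpleGraph (V × W) where
  Adj p q := (p.1 = q.1 ∧ H.Adj p.2 q.2) ∨ (G.Adj p.1 q.1 ∧ p.2 = q.2) ∨
    (G.Adj p.1 q.1 ∧ H.Adj p.2 q.2)
  symm := by
    constructor
    rintro ⟨a, b⟩ ⟨x, y⟩ (⟨h1, h2⟩ | ⟨h1, h2⟩ | ⟨h1, h2⟩)
    · exact Or.inl ⟨h1.symm, h2.symm⟩
    · exact Or.inr (Or.inl ⟨h1.symm, h2.symm⟩)
    · exact Or.inr (Or.inr ⟨h1.symm, h2.symm⟩)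
  loopless := by
    constructor
    rintro ⟨a, b⟩ (⟨h1, h2⟩ | ⟨h1, h2⟩ | ⟨h1, h2⟩)
    · exact H.irrefl h2
    · exact G.irrefl h1
    · exact G.irrefl h1

/-- The lexicographical product of two simple graphs. -/
def lexProd (G : SimpleGraph V) (H : SimpleGraph W) : SimpleGraph (V × W) where
  Adj p q := G.Adj p.1 q.1 ∨ (p.1 = q.1 ∧ H.Adj p.2 q.2)
  symm := by
    constructor
    rintro ⟨a, b⟩ ⟨x, y⟩ (h | ⟨h1, h2⟩)
    · exact Or.inl h.symm
    · exact Or.inr ⟨h1.symm, h2.symm⟩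
  loopless := by
    constructor
    rintro ⟨a, b⟩ (h | ⟨h1, h2⟩)
    · exact G.irrefl h
    · exact H.irrefl h2

instance {G : SimpleGraph V} {H : SimpleGraph W} [DecidableEq V] [DecidableEq W]
    [DecidableRel G.Adj] [DecidableRel H.Adj] : DecidableRel (strongProd G H).Adj := fun p q =>
  show Decidable ((p.1 = q.1 ∧ H.Adj p.2 q.2) ∨ (G.Adj p.1 q.1 ∧ p.2 = q.2) ∨
    (G.Adj p.1 q.1 ∧ H.Adj p.2 q.2)) from inferInstance

/-- A colouring is `d`-improper if every colour class induces a subgraph of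
maximum degree at most `d`. -/
def IsImproperColoring (G : SimpleGraph V) (d : ℕ) {α : Type*} (c : V → α) : Prop :=
  ∀ v : V, ({w | G.Adj v w ∧ c w = c v} : Set V).ncard ≤ d

/-- The `d`-improper chromatic number. -/
noncomputable def improperChromaticNumber (G : SimpleGraph V) (d : ℕ) : ℕ :=
  sInf {n | ∃ c : V → Fin n, IsImproperColoring G d c}

/-- A colouring is `t`-clustered if every monochromatic connected component has at
most `t` vertices. -/
def IsClusteredColoring (G : SimpleGraph V) (t : ℕ) {α : Type*} (c : V → α) : Prop :=
  ∀ v : V,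
    ({w | Relation.ReflTransGen (fun a b => G.Adj a b ∧ c a = c b) v w} : Set V).ncard ≤ t

/-- The `t`-clustered chromatic number. -/
noncomputable def clusteredChromaticNumber (G : SimpleGraph V) (t : ℕ) : ℕ :=
  sInf {n | ∃ c : V → Fin n, IsClusteredColoring G t c}

/-- The chromatic number: least `n` admitting a proper colouring with `n` colours. -/
noncomputable def chromNum (G : SimpleGraph V) : ℕ :=
  sInf {n | ∃ c : V → Fin n, ∀ u v, G.Adj u v → c u ≠ c v}

/-- The `b`-fold `d`-improper chromatic number: least number of colours in an assignment
of `b` colours to each vertex such that, for every colour `x`, the set of vertices whose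
colour set contains `x` induces a subgraph of maximum degree at most `d`. -/
noncomputable def bFoldImproperChromaticNumber (G : SimpleGraph V) (b d : ℕ) : ℕ :=
  sInf {n | ∃ c : V → Finset (Fin n), (∀ v, (c v).card = b) ∧
    ∀ v : V, ∀ x ∈ c v, ({w | G.Adj v w ∧ x ∈ c w} : Set V).ncard ≤ d}

/-- The (proper) `b`-fold chromatic number. -/
noncomputable def bFoldChromaticNumber (G : SimpleGraph V) (b : ℕ) : ℕ :=
  bFoldImproperChromaticNumber G b 0

/-- The `b`-fold `t`-clustered chromatic number. -/
noncomputable def bFoldClusteredChromaticNumber (G : SimpleGraph V) (b t : ℕ) : ℕ :=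
  sInf {n | ∃ c : V → Finset (Fin n), (∀ v, (c v).card = b) ∧
    ∀ x : Fin n, ∀ v : V, x ∈ c v →
      ({w | Relation.ReflTransGen (fun a b' => G.Adj a b' ∧ x ∈ c a ∧ x ∈ c b') v w} :
        Set V).ncard ≤ t}

/-- The fractional chromatic number `χ_f(G) = inf { χ_b(G)/b : b ≥ 1 }`. -/
noncomputable def fracChromaticNumber (G : SimpleGraph V) : ℝ :=
  sInf {x : ℝ | ∃ b : ℕ, 0 < b ∧ x = (bFoldChromaticNumber G b : ℝ) / b}

/-- The fractional `d`-improper chromatic number. -/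
noncomputable def fracImproperChromaticNumber (G : SimpleGraph V) (d : ℕ) : ℝ :=
  sInf {x : ℝ | ∃ b : ℕ, 0 < b ∧ x = (bFoldImproperChromaticNumber G b d : ℝ) / b}

/-- The fractional `t`-clustered chromatic number. -/
noncomputable def fracClusteredChromaticNumber (G : SimpleGraph V) (t : ℕ) : ℝ :=
  sInf {x : ℝ | ∃ b : ℕ, 0 < b ∧ x = (bFoldClusteredChromaticNumber G b t : ℝ) / b}

/-- `lam` lists the eigenvalues of the Hermitian matrix `A` (with multiplicity) in
non-increasing order. -/
def IsEigList {n : ℕ} {A : Matrix (Fin n) (Fin n) ℝ} (hA : A.IsHermitian)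
    (lam : Fin n → ℝ) : Prop :=
  Antitone lam ∧ ∃ σ : Equiv.Perm (Fin n), lam = hA.eigenvalues ∘ σ

/-- The largest size of a vertex subset inducing a subgraph of maximum degree at most `d`. -/
noncomputable def maxImproperIndep (G : SimpleGraph V) (d : ℕ) : ℕ :=
  sSup {k | ∃ s : Set V, s.ncard = k ∧ ∀ v ∈ s, ({w | w ∈ s ∧ G.Adj v w} : Set V).ncard ≤ d}

end ImproperPaper

open scoped MatrixOrder in
theorem Matrix.IsHermitian.mul_dotProduct_self_le_dotProduct_mulVec {ι : Type*} [Fintype ι]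
    [DecidableEq ι] {A : Matrix ι ι ℝ} (hA : A.IsHermitian) {r : ℝ} (hr : ∀ i, r ≤ hA.eigenvalues i)
    (v : ι → ℝ) : r * (v ⬝ᵥ v) ≤ v ⬝ᵥ A *ᵥ v := by
  have h : algebraMap ℝ _ r ≤ A := by
    rw [algebraMap_le_iff_le_spectrum hA.isSelfAdjoint, hA.spectrum_real_eq_range_eigenvalues]
    rintro _ ⟨i, rfl⟩
    exact hr i
  simpa [sub_mulVec, dotProduct_sub, Algebra.algebraMap_eq_smul_one, smul_mulVec,
    dotProduct_smul] using (Matrix.le_iff.1 h).dotProduct_mulVec_nonneg v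

theorem Matrix.IsHermitian.sub_le_card_mul_of_decomposition {ι κ : Type*} [Fintype ι]
    [DecidableEq ι] [Fintype κ] {A : Matrix ι ι ℝ} (hA : A.IsHermitian) {r μ d : ℝ}
    (hr : ∀ i, r ≤ hA.eigenvalues i) {x : ι → ℝ} (hx0 : x ≠ 0) (hx : A *ᵥ x = μ • x)
    (y : κ → ι → ℝ) (hyx : ∀ i, y i ⬝ᵥ x = y i ⬝ᵥ y i) (hsum : ∑ i, y i ⬝ᵥ y i = x ⬝ᵥ x)
    (hyA : ∀ i, y i ⬝ᵥ A *ᵥ y i ≤ d * (y i ⬝ᵥ y i)) :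
    μ - r ≤ Fintype.card κ * (d - r) := by
  set k : ℝ := (Fintype.card κ : ℝ)
  have hxx : 0 < x ⬝ᵥ x :=
    (sum_nonneg fun i _ => mul_self_nonneg (x i)).lt_of_ne' (dotProduct_self_eq_zero.not.2 hx0)
  have hk : 0 < k := by
    have : Nonempty κ := univ_nonempty_iff.1 (nonempty_of_sum_ne_zero (hsum ▸ hxx.ne'))
    exact Nat.cast_pos.2 Fintype.card_pos
  have hxA : ∀ v, x ⬝ᵥ A *ᵥ v = μ * (x ⬝ᵥ v) := fun v => by
    rw [dotProduct_mulVec, ← mulVec_transpose, (isHermitian_iff_isSymm.1 hA).eq, hx,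
      smul_dotProduct, smul_eq_mul]
  have hAx : ∀ v, v ⬝ᵥ A *ᵥ x = μ * (v ⬝ᵥ x) := fun v => by
    rw [hx, dotProduct_smul, smul_eq_mul]
  have hray : ∀ i, r * (x ⬝ᵥ x - 2 * k * (y i ⬝ᵥ y i) + k ^ 2 * (y i ⬝ᵥ y i)) ≤
      μ * (x ⬝ᵥ x) - 2 * k * μ * (y i ⬝ᵥ y i) + k ^ 2 * (d * (y i ⬝ᵥ y i)) := by
    intro i
    have h := hA.mul_dotProduct_self_le_dotProduct_mulVec hr (x - k • y i)
    simp only [sub_dotProduct, dotProduct_sub, smul_dotProduct, dotProduct_smul, mulVec_sub,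
      mulVec_smul, smul_eq_mul, hxA, hAx, hyx, dotProduct_comm x (y i)] at h
    have := mul_le_mul_of_nonneg_left (hyA i) (sq_nonneg k)
    linarith
  have h := sum_le_sum fun i (_ : i ∈ univ) => hray i
  simp only [← mul_sum, sum_add_distrib, sum_sub_distrib, sum_const, card_univ, nsmul_eq_mul,
    hsum] at h
  nlinarith [mul_pos hk hxx]

theorem Matrix.indicator_dotProduct_self {ι : Type*} [Fintype ι] (s : Set ι) (x : ι → ℝ) :
    s.indicator x ⬝ᵥ x = s.indicator x ⬝ᵥ s.indicator x := by
  classical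
  refine sum_congr rfl fun w _ => ?_
  by_cases hw : w ∈ s <;> simp [hw]

theorem Matrix.sum_indicator_fiber_dotProduct {ι κ : Type*} [Fintype ι] [Fintype κ]
    (c : ι → κ) (x : ι → ℝ) :
    ∑ i, (c ⁻¹' {i}).indicator x ⬝ᵥ (c ⁻¹' {i}).indicator x = x ⬝ᵥ x := by
  classical
  simp only [dotProduct]
  rw [sum_comm]
  refine sum_congr rfl fun w _ => ?_
  simp [Set.indicator_apply, ← ite_and]

theorem SimpleGraph.dotProduct_adjMatrix_mulVec_le {V : Type*} [Fintype V] [DecidableEq V]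
    (G : SimpleGraph V) [DecidableRel G.Adj] {S : Finset V} {d : ℕ}
    (hS : ∀ v ∈ S, #(G.neighborFinset v ∩ S) ≤ d) {y : V → ℝ} (hy : ∀ v ∉ S, y v = 0) :
    y ⬝ᵥ G.adjMatrix ℝ *ᵥ y ≤ d * (y ⬝ᵥ y) := by
  have hswap : ∑ u ∈ S, ∑ w ∈ G.neighborFinset u ∩ S, y w ^ 2 =
      ∑ u ∈ S, ∑ w ∈ G.neighborFinset u ∩ S, y u ^ 2 :=
    sum_comm' fun u w => by simp only [mem_inter, mem_neighborFinset, G.adj_comm]; tauto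
  calc y ⬝ᵥ G.adjMatrix ℝ *ᵥ y
      = ∑ u ∈ S, ∑ w ∈ G.neighborFinset u ∩ S, y u * y w := by
        simp only [dotProduct, G.adjMatrix_mulVec_apply, mul_sum]
        rw [← sum_subset (subset_univ S) fun u _ hu => by simp [hy u hu]]
        refine sum_congr rfl fun u _ => ?_
        rw [sum_subset inter_subset_left fun w _ hw => by simp [hy w (by simp_all)]]
    _ ≤ ∑ u ∈ S, ∑ w ∈ G.neighborFinset u ∩ S, (y u ^ 2 + y w ^ 2) / 2 := by
        gcongr with u _ w _
        linarith [sq_nonneg (y u - y w)]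
    _ = ∑ u ∈ S, #(G.neighborFinset u ∩ S) * y u ^ 2 := by
        simp only [← sum_div, sum_add_distrib, hswap, sum_const, nsmul_eq_mul]
        ring
    _ ≤ ∑ u ∈ S, d * y u ^ 2 := by
        gcongr with u hu
        exact_mod_cast hS u hu
    _ = d * (y ⬝ᵥ y) := by
        rw [← mul_sum, dotProduct, sum_subset (subset_univ S) fun u _ hu => by simp [hy u hu]]
        simp only [sq]

theorem SimpleGraph.le_neg_one_of_forall_le_eigenvalues {V : Type*} [Fintype V] [DecidableEq V]
    (G : SimpleGraph V) [DecidableRel G.Adj] (hA : (G.adjMatrix ℝ).IsHermitian) {a b : V}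
    (hab : G.Adj a b) {r : ℝ} (hr : ∀ i, r ≤ hA.eigenvalues i) : r ≤ -1 := by
  have hne := G.ne_of_adj hab
  set v : V → ℝ := Pi.single a 1 - Pi.single b 1 with hv
  have hvv : v ⬝ᵥ v = 2 := by
    norm_num [hv, dotProduct_sub, hne, hne.symm]
  have hvAv : v ⬝ᵥ G.adjMatrix ℝ *ᵥ v = -2 := by
    norm_num [hv, mulVec_sub, dotProduct_sub, sub_dotProduct, adjMatrix_apply, hab, hab.symm,
      hne, hne.symm]
  have h := hA.mul_dotProduct_self_le_dotProduct_mulVec hr v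
  rw [hvv, hvAv] at h
  linarith

namespace ImproperPaper

theorem IsEigList.le_eigenvalues {n : ℕ} {A : Matrix (Fin n) (Fin n) ℝ} {hA : A.IsHermitian}
    {lam : Fin n → ℝ} (hlam : IsEigList hA lam) (h : n - 1 < n) (j : Fin n) :
    lam ⟨n - 1, h⟩ ≤ hA.eigenvalues j := by
  obtain ⟨hanti, σ, rfl⟩ := hlam
  simpa using hanti (show σ.symm j ≤ ⟨n - 1, h⟩ from
    Fin.le_def.2 (Nat.le_sub_one_of_lt (σ.symm j).isLt))

theorem IsEigList.exists_mulVec_eq_smul {n : ℕ} {A : Matrix (Fin n) (Fin n) ℝ}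
    {hA : A.IsHermitian} {lam : Fin n → ℝ} (hlam : IsEigList hA lam) (i : Fin n) :
    ∃ x, x ≠ 0 ∧ A *ᵥ x = lam i • x := by
  obtain ⟨-, σ, rfl⟩ := hlam
  exact ⟨_, by simpa using hA.eigenvectorBasis.orthonormal.ne_zero (σ i),
    hA.mulVec_eigenvectorBasis (σ i)⟩

theorem exists_isImproperColoring_improperChromaticNumber {V : Type*} [Finite V]
    (G : SimpleGraph V) (d : ℕ) :
    ∃ c : V → Fin (improperChromaticNumber G d), IsImproperColoring G d c := by
  refine Nat.sInf_mem (s := {m | ∃ c : V → Fin m, IsImproperColoring G d c})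
    ⟨Nat.card V, Finite.equivFin V, fun v => ?_⟩
  simp only [EmbeddingLike.apply_eq_iff_eq]
  have : {w | G.Adj v w ∧ w = v} = ∅ :=
    Set.eq_empty_of_forall_notMem fun w hw => G.irrefl (hw.2 ▸ hw.1)
  simp [this]

theorem IsImproperColoring.card_neighborFinset_inter_fiber_le {V κ : Type*} [Fintype V]
    [DecidableEq V] {G : SimpleGraph V} [DecidableRel G.Adj] [DecidableEq κ] {d : ℕ}
    {c : V → κ} (hc : IsImproperColoring G d c) {i : κ} {v : V} (hv : c v = i) :
    #(G.neighborFinset v ∩ ({w | c w = i} : Finset V)) ≤ d := by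
  have h := hc v
  rw [Set.ncard_eq_toFinset_card'] at h
  convert h using 2
  ext w
  simp [hv]

theorem IsImproperColoring.indicator_dotProduct_adjMatrix_mulVec_le {V κ : Type*} [Fintype V]
    [DecidableEq V] {G : SimpleGraph V} [DecidableRel G.Adj] {d : ℕ}
    {c : V → κ} (hc : IsImproperColoring G d c) (i : κ) (x : V → ℝ) :
    (c ⁻¹' {i}).indicator x ⬝ᵥ G.adjMatrix ℝ *ᵥ (c ⁻¹' {i}).indicator x ≤
      d * ((c ⁻¹' {i}).indicator x ⬝ᵥ (c ⁻¹' {i}).indicator x) := by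
  classical
  refine G.dotProduct_adjMatrix_mulVec_le (S := ({w | c w = i} : Finset V)) (fun v hv => ?_)
    fun v hv => ?_
  · exact hc.card_neighborFinset_inter_fiber_le (by simpa using hv)
  · exact Set.indicator_of_notMem (by simpa using hv) x

end ImproperPaper

open ImproperPaper in

theorem stmt_0 {n : ℕ} (hn : 1 ≤ n) (G : SimpleGraph (Fin n)) [DecidableRel G.Adj]
    (hedge : ∃ u v : Fin n, G.Adj u v) (d : ℕ)
    (hA : (G.adjMatrix ℝ).IsHermitian) (lam : Fin n → ℝ) (hlam : IsEigList hA lam) :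
    (lam ⟨0, by omega⟩ - lam ⟨n - 1, by omega⟩) / ((d : ℝ) - lam ⟨n - 1, by omega⟩) ≤
        (improperChromaticNumber G d : ℝ) ∧
      (lam ⟨0, by omega⟩ - lam ⟨n - 1, by omega⟩) / ((d : ℝ) - lam ⟨n - 1, by omega⟩) =
        1 - (lam ⟨0, by omega⟩ - (d : ℝ)) / (lam ⟨n - 1, by omega⟩ - (d : ℝ)) := by
  obtain ⟨a, b, hab⟩ := hedge
  have hmin := hlam.le_eigenvalues (by omega)
  have hgap : 0 < (d : ℝ) - lam ⟨n - 1, by omega⟩ := by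
    linarith [G.le_neg_one_of_forall_le_eigenvalues hA hab hmin, d.cast_nonneg (α := ℝ)]
  obtain ⟨x, hx0, hx⟩ := hlam.exists_mulVec_eq_smul ⟨0, by omega⟩
  obtain ⟨c, hc⟩ := exists_isImproperColoring_improperChromaticNumber G d
  have hbound := hA.sub_le_card_mul_of_decomposition hmin hx0 hx _
    (fun i => indicator_dotProduct_self (c ⁻¹' {i}) x) (sum_indicator_fiber_dotProduct c x)
    (fun i => hc.indicator_dotProduct_adjMatrix_mulVec_le i x)
  rw [Fintype.card_fin] at hbound
  refine ⟨(div_le_iff₀ hgap).2 hbound, ?_⟩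
  have : lam ⟨n - 1, by omega⟩ - (d : ℝ) ≠ 0 := by linarith
  field_simp
  ring
end

section
/- For every finite simple graph G and every positive integer d, the fractional d-improper chromatic number of the strong product of G with K_{d+1} equals the fractional chromatic number of G: χ_f^d(G ⊠ K_{d+1}) = χ_f(G). -/
open SimpleGraph Finset Matrix

/-! A proper `b`-fold colouring of `G`, pulled back along the projection, is a `d`-improper
`b`-fold colouring of `G ⊠ K_{d+1}`: a monochromatic neighbour of `(v, i)` lies in the fibre of `v`,
which has only `d` other vertices. Conversely, a colour class of a `d`-improper `b`-fold colouring
of `G ⊠ K_{d+1}` induces maximum degree at most `d`, so greedily splits into `d + 1` independent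
sets. Splitting every colour this way and giving `v` all colours of its fibre yields a proper
`(d + 1) b`-fold colouring of `G` (the fibres are cliques and adjacent fibres are completely
joined). Thus `χ_b^d(G ⊠ K_{d+1}) ≤ χ_b(G)` and `χ_{(d+1)b}(G) ≤ (d + 1) χ_b^d(G ⊠ K_{d+1})`,
and the two infima coincide. -/

namespace ImproperPaper

variable {V W α β : Type*} {G : SimpleGraph V} {b d : ℕ}

theorem exists_fin_coloring_on_of_card_neighbors_le [DecidableEq V] [DecidableRel G.Adj]
    (s : Finset V) (h : ∀ v ∈ s, #{w ∈ s | G.Adj v w} ≤ d) :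
    ∃ g : V → Fin (d + 1), ∀ v ∈ s, ∀ w ∈ s, G.Adj v w → g v ≠ g w := by
  induction s using Finset.induction_on with
  | empty => exact ⟨0, by simp⟩
  | insert a s ha ih =>
    have h_nbrs (v) : #{w ∈ s | G.Adj v w} ≤ #{w ∈ insert a s | G.Adj v w} :=
      card_le_card (filter_subset_filter _ (subset_insert a s))
    obtain ⟨g, hg⟩ := ih fun v hv => (h_nbrs v).trans (h v (mem_insert_of_mem hv))
    obtain ⟨k, -, hk⟩ :
        ∃ k, k ∈ (univ : Finset (Fin (d + 1))) ∧ k ∉ {w ∈ s | G.Adj a w}.image g :=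
      exists_mem_notMem_of_card_lt_card <| by
        have : #({w ∈ s | G.Adj a w}.image g) ≤ d :=
          card_image_le.trans ((h_nbrs a).trans (h a (mem_insert_self a s)))
        simp only [card_univ, Fintype.card_fin]
        omega
    have h_new : ∀ w ∈ s, G.Adj a w → k ≠ g w := fun w hw haw hkw =>
      hk (mem_image.2 ⟨w, mem_filter.2 ⟨hw, haw⟩, hkw.symm⟩)
    have h_old : ∀ w ∈ s, Function.update g a k w = g w := fun w hw =>
      Function.update_of_ne (ne_of_mem_of_not_mem hw ha) _ _
    refine ⟨Function.update g a k, ?_⟩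
    simp only [mem_insert]
    rintro v (rfl | hv) w (rfl | hw) hvw
    · exact (G.irrefl hvw).elim
    · rw [Function.update_self, h_old w hw]
      exact h_new w hw hvw
    · rw [Function.update_self, h_old v hv]
      exact (h_new v hv hvw.symm).symm
    · rw [h_old v hv, h_old w hw]
      exact hg v hv w hw hvw

/-- The colourings counted by `bFoldImproperChromaticNumber`, with colours from any type. -/
def IsBFoldImproperColoring (G : SimpleGraph V) (b d : ℕ) (c : V → Finset α) : Prop :=
  (∀ v, #(c v) = b) ∧ ∀ v, ∀ x ∈ c v, {w | G.Adj v w ∧ x ∈ c w}.ncard ≤ d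

theorem IsBFoldImproperColoring.map {c : V → Finset α} (hc : IsBFoldImproperColoring G b d c)
    (e : α ↪ β) : IsBFoldImproperColoring G b d fun v => (c v).map e := by
  refine ⟨fun v => by simp [hc.1 v], fun v x hx => ?_⟩
  obtain ⟨y, hy, rfl⟩ := mem_map.1 hx
  simpa only [mem_map'] using hc.2 v y hy

theorem bFoldImproperChromaticNumber_le_card [Fintype α] {c : V → Finset α}
    (hc : IsBFoldImproperColoring G b d c) :
    bFoldImproperChromaticNumber G b d ≤ Fintype.card α :=
  Nat.sInf_le ⟨_, hc.map (Fintype.equivFin α).toEmbedding⟩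

theorem isBFoldImproperColoring_singleton_product (G : SimpleGraph V) (b d : ℕ) :
    IsBFoldImproperColoring G b d fun v => ({v} : Finset V) ×ˢ (univ : Finset (Fin b)) := by
  refine ⟨fun v => by simp, fun v x hx => ?_⟩
  simp only [mem_product, mem_singleton, mem_univ, and_true] at hx ⊢
  subst hx
  have h_empty : {w | G.Adj x.1 w ∧ x.1 = w} = ∅ := by
    refine Set.eq_empty_of_forall_notMem ?_
    rintro w ⟨hw, rfl⟩
    exact G.irrefl hw
  simp [h_empty]

theorem exists_isBFoldImproperColoring [Fintype V] (G : SimpleGraph V) (b d : ℕ) :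
    ∃ c : V → Finset (Fin (bFoldImproperChromaticNumber G b d)),
      IsBFoldImproperColoring G b d c :=
  Nat.sInf_mem (s := {n | ∃ c : V → Finset (Fin n), IsBFoldImproperColoring G b d c})
    ⟨_, _, (isBFoldImproperColoring_singleton_product G b d).map
      (Fintype.equivFin _).toEmbedding⟩

theorem IsBFoldImproperColoring.comp_fst [Finite V] [Finite W] {H : SimpleGraph W}
    {c : V → Finset α} (hc : IsBFoldImproperColoring G b 0 c)
    (hH : ∀ i, {j | H.Adj i j}.ncard ≤ d) :
    IsBFoldImproperColoring (strongProd G H) b d (c ∘ Prod.fst) := by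
  refine ⟨fun p => hc.1 p.1, ?_⟩
  rintro ⟨v, i⟩ x hx
  have h_fibre : {q : V × W | (strongProd G H).Adj (v, i) q ∧ x ∈ c q.1} ⊆
      Prod.mk v '' {j | H.Adj i j} := by
    have h_no : ∀ w, ¬(G.Adj v w ∧ x ∈ c w) := fun w hw =>
      ((Set.ncard_eq_zero (Set.toFinite _)).1 (Nat.le_zero.1 (hc.2 v x hx))).subset hw
    rintro ⟨w, j⟩ ⟨⟨rfl, hij⟩ | ⟨hvw, -⟩ | ⟨hvw, -⟩, hxw⟩
    · exact ⟨j, hij, rfl⟩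
    all_goals exact absurd ⟨hvw, hxw⟩ (h_no w)
  calc _ ≤ (Prod.mk v '' {j | H.Adj i j}).ncard := Set.ncard_le_ncard h_fibre (Set.toFinite _)
    _ = {j | H.Adj i j}.ncard := Set.ncard_image_of_injective _ (Prod.mk_right_injective v)
    _ ≤ d := hH i

theorem bFoldImproperChromaticNumber_strongProd_le [Fintype V] [Finite W] (G : SimpleGraph V)
    {H : SimpleGraph W} (hH : ∀ i, {j | H.Adj i j}.ncard ≤ d) (b : ℕ) :
    bFoldImproperChromaticNumber (strongProd G H) b d ≤ bFoldChromaticNumber G b := by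
  obtain ⟨c, hc⟩ := exists_isBFoldImproperColoring G b 0
  simpa [bFoldChromaticNumber] using bFoldImproperChromaticNumber_le_card (hc.comp_fst hH)

theorem IsBFoldImproperColoring.exists_separating [Fintype V] {c : V → Finset α}
    (hc : IsBFoldImproperColoring G b d c) :
    ∃ g : α → V → Fin (d + 1), ∀ x v w, G.Adj v w → x ∈ c v → x ∈ c w → g x v ≠ g x w := by
  classical
  have h_class (x : α) :
      ∃ g : V → Fin (d + 1), ∀ v w, G.Adj v w → x ∈ c v → x ∈ c w → g v ≠ g w := by
    obtain ⟨g, hg⟩ := exists_fin_coloring_on_of_card_neighbors_le (G := G) {v | x ∈ c v}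
      fun v hv => by
        refine le_of_eq_of_le ?_ (hc.2 v x (mem_filter.1 hv).2)
        rw [← Set.ncard_coe_finset]
        congr 1
        ext w
        simp [and_comm]
    exact ⟨g, fun v w hvw hv hw => hg v (by simpa) w (by simpa) hvw⟩
  choose g hg using h_class
  exact ⟨g, hg⟩

/-- Merges the colour sets of the fibre `{v} × W` into one colour set of `v`, telling the copies
of a colour apart by a second coordinate `g x`. -/
def fibreUnion [Fintype W] [DecidableEq α] {k : ℕ} (c : V × W → Finset α)
    (g : α → V × W → Fin k) (v : V) : Finset (α × Fin k) :=
  univ.biUnion fun i => (c (v, i)).image fun x => (x, g x (v, i))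

theorem mem_fibreUnion [Fintype W] [DecidableEq α] {k : ℕ} {c : V × W → Finset α}
    {g : α → V × W → Fin k} {v : V} {x : α} {j : Fin k} :
    (x, j) ∈ fibreUnion c g v ↔ ∃ i, x ∈ c (v, i) ∧ g x (v, i) = j := by
  simp [fibreUnion]

theorem IsBFoldImproperColoring.fibreUnion [Fintype W] [DecidableEq α] {k : ℕ}
    {c : V × W → Finset α} (hc : IsBFoldImproperColoring (strongProd G ⊤) b d c)
    {g : α → V × W → Fin k}
    (hg : ∀ x p q, (strongProd G ⊤).Adj p q → x ∈ c p → x ∈ c q → g x p ≠ g x q) :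
    IsBFoldImproperColoring G (Fintype.card W * b) 0 (fibreUnion c g) := by
  refine ⟨fun v => ?_, fun v ⟨x, j⟩ hv => ?_⟩
  · have h_inj (i : W) : Function.Injective fun x => (x, g x (v, i)) :=
      fun x y h => (Prod.mk.inj h).1
    rw [ImproperPaper.fibreUnion, card_biUnion]
    · simp only [card_image_of_injective _ (h_inj _), hc.1, sum_const, card_univ, smul_eq_mul]
    · intro i _ i' _ hii'
      rw [Function.onFun, Finset.disjoint_left]
      rintro ⟨x, j⟩ hi hi'
      simp only [mem_image, Prod.mk.injEq] at hi hi'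
      obtain ⟨_, hx, rfl, rfl⟩ := hi
      obtain ⟨y, hy, rfl, hj⟩ := hi'
      exact hg y (v, i) (v, i') (Or.inl ⟨rfl, hii'⟩) hx hy hj.symm
  · suffices h_empty : {w | G.Adj v w ∧ (x, j) ∈ ImproperPaper.fibreUnion c g w} = ∅ by
      simp [h_empty]
    ext w
    simp only [Set.mem_ofPred_eq, Set.mem_empty_iff_false, iff_false, not_and]
    intro hvw hw
    obtain ⟨i, hx, rfl⟩ := mem_fibreUnion.1 hv
    obtain ⟨i', hx', hj⟩ := mem_fibreUnion.1 hw
    have h_adj : (strongProd G ⊤).Adj (v, i) (w, i') := by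
      by_cases hii' : i = i'
      · exact Or.inr (Or.inl ⟨hvw, hii'⟩)
      · exact Or.inr (Or.inr ⟨hvw, hii'⟩)
    exact hg x _ _ h_adj hx hx' hj.symm

theorem bFoldChromaticNumber_card_mul_le [Fintype V] [Fintype W] (G : SimpleGraph V)
    (b d : ℕ) :
    bFoldChromaticNumber G (Fintype.card W * b) ≤
      (d + 1) * bFoldImproperChromaticNumber (strongProd G (⊤ : SimpleGraph W)) b d := by
  obtain ⟨c, hc⟩ := exists_isBFoldImproperColoring (strongProd G (⊤ : SimpleGraph W)) b d
  obtain ⟨g, hg⟩ := hc.exists_separating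
  simpa [bFoldChromaticNumber, mul_comm] using
    bFoldImproperChromaticNumber_le_card (hc.fibreUnion hg)

theorem sInf_ratio_le_sInf_ratio {a c : ℕ → ℕ}
    (h : ∀ b, 0 < b → ∃ b', 0 < b' ∧ (a b' : ℝ) / b' ≤ c b / b) :
    sInf {x : ℝ | ∃ b, 0 < b ∧ x = a b / b} ≤ sInf {x : ℝ | ∃ b, 0 < b ∧ x = c b / b} := by
  refine le_csInf ⟨_, 1, one_pos, rfl⟩ ?_
  rintro _ ⟨b, hb, rfl⟩
  obtain ⟨b', hb', h_le⟩ := h b hb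
  refine csInf_le_of_le ⟨0, ?_⟩ ⟨b', hb', rfl⟩ h_le
  rintro _ ⟨_, _, rfl⟩
  positivity

end ImproperPaper

open ImproperPaper in

theorem stmt_5_general {V : Type*} [Fintype V] (G : SimpleGraph V) (d : ℕ) :
    fracImproperChromaticNumber (strongProd G (⊤ : SimpleGraph (Fin (d + 1)))) d =
      fracChromaticNumber G := by
  have h_deg (i : Fin (d + 1)) : {j | (⊤ : SimpleGraph (Fin (d + 1))).Adj i j}.ncard ≤ d := by
    have h_nbrs : {j | (⊤ : SimpleGraph (Fin (d + 1))).Adj i j} = {i}ᶜ := by ext; simp [eq_comm]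
    rw [h_nbrs, Set.ncard_compl]
    simp
  apply le_antisymm
  · refine sInf_ratio_le_sInf_ratio fun b hb => ⟨b, hb, ?_⟩
    gcongr
    exact bFoldImproperChromaticNumber_strongProd_le G h_deg b
  · refine sInf_ratio_le_sInf_ratio fun b hb => ⟨(d + 1) * b, by positivity, ?_⟩
    have h_le := bFoldChromaticNumber_card_mul_le (W := Fin (d + 1)) G b d
    rw [Fintype.card_fin] at h_le
    calc (bFoldChromaticNumber G ((d + 1) * b) : ℝ) / ((d + 1) * b : ℕ)
        ≤ ((d + 1) * bFoldImproperChromaticNumber _ b d : ℕ) / ((d + 1) * b : ℕ) := by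
          gcongr
      _ = _ := by push_cast; exact mul_div_mul_left _ _ (by positivity)

open ImproperPaper in
theorem stmt_5 {V : Type*} [Fintype V] (G : SimpleGraph V) (d : ℕ) (hd : 0 < d) :
    fracImproperChromaticNumber (strongProd G (⊤ : SimpleGraph (Fin (d + 1)))) d =
      fracChromaticNumber G :=
  stmt_5_general G d
end

section
/- Let H be a finite simple graph on k vertices. Then for every finite simple graph G and every integer t ≥ k, the t-clustered chromatic number of the lexicographical product G[H] equals that of the strong product G ⊠ K_k: χ^{\underline{t}}(G[H]) = χ^{\underline{t}}(G ⊠ K_k). -/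
open SimpleGraph Finset Matrix

/-!
A monochromatic component of a colouring of `G[H]` that stays inside one copy of `H` has
at most `|V(H)| ≤ t` vertices. One that meets two copies has, at each of its vertices, an
edge to another copy, so every edge it uses inside a copy can be rerouted through a
neighbouring copy; such a component is therefore the same for every choice of `H`. Hence
`H` may be replaced by `K_k`, and `G[K_k] = G ⊠ K_k`.
-/

namespace ImproperPaper

variable {V V' W W' α : Type*}

def monoGraph (G : SimpleGraph V) (c : V → α) : SimpleGraph V where
  Adj a b := G.Adj a b ∧ c a = c b
  symm := ⟨fun _ _ h => ⟨h.1.symm, h.2.symm⟩⟩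
  loopless := ⟨fun _ h => G.irrefl h.1⟩

@[simp]
theorem monoGraph_adj {G : SimpleGraph V} {c : V → α} {a b : V} :
    (monoGraph G c).Adj a b ↔ G.Adj a b ∧ c a = c b := Iff.rfl

theorem isClusteredColoring_iff_reachable {G : SimpleGraph V} {t : ℕ} {c : V → α} :
    IsClusteredColoring G t c ↔ ∀ v, {w | (monoGraph G c).Reachable v w}.ncard ≤ t := by
  simp only [reachable_iff_reflTransGen]
  rfl

theorem monoGraph.apply_eq_of_reachable {G : SimpleGraph V} {c : V → α} {v w : V}
    (h : (monoGraph G c).Reachable v w) : c w = c v := by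
  rw [reachable_iff_reflTransGen] at h
  induction h with
  | refl => rfl
  | tail _ hab ih => exact (monoGraph_adj.1 hab).2.symm.trans ih

theorem _root_.SimpleGraph.Reachable.of_adj_imp_reachable {G G' : SimpleGraph V} {p q : V}
    (h : ∀ a b, G.Reachable p a → G.Adj a b → G'.Reachable a b) (hpq : G.Reachable p q) :
    G'.Reachable p q := by
  rw [reachable_iff_reflTransGen] at hpq
  induction hpq with
  | refl => rfl
  | tail hpa hab ih => exact ih.trans (h _ _ ((reachable_iff_reflTransGen _ _).2 hpa) hab)

theorem IsClusteredColoring.comp_hom [Finite V'] {G : SimpleGraph V} {G' : SimpleGraph V'}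
    {t : ℕ} {c : V' → α} (hc : IsClusteredColoring G' t c) (f : G →g G')
    (hf : Function.Injective f) : IsClusteredColoring G t (c ∘ f) := by
  rw [isClusteredColoring_iff_reachable] at hc ⊢
  intro v
  let f' : monoGraph G (c ∘ f) →g monoGraph G' c :=
    ⟨f, fun h => ⟨f.map_adj (monoGraph_adj.1 h).1, (monoGraph_adj.1 h).2⟩⟩
  calc {w | (monoGraph G (c ∘ f)).Reachable v w}.ncard
      ≤ {w | (monoGraph G' c).Reachable (f v) w}.ncard :=
        Set.ncard_le_ncard_of_injOn f (fun _ hw => hw.map f') hf.injOn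
    _ ≤ t := hc (f v)

theorem clusteredChromaticNumber_congr [Finite V] [Finite V'] {G : SimpleGraph V}
    {G' : SimpleGraph V'} (e : G ≃g G') (t : ℕ) :
    clusteredChromaticNumber G t = clusteredChromaticNumber G' t := by
  unfold clusteredChromaticNumber
  congr 1
  ext n
  constructor
  · rintro ⟨c, hc⟩
    exact ⟨c ∘ e.symm, hc.comp_hom e.symm.toHom e.symm.injective⟩
  · rintro ⟨c, hc⟩
    exact ⟨c ∘ e, hc.comp_hom e.toHom e.injective⟩

@[simp]
theorem lexProd_adj {G : SimpleGraph V} {H : SimpleGraph W} {p q : V × W} :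
    (lexProd G H).Adj p q ↔ G.Adj p.1 q.1 ∨ (p.1 = q.1 ∧ H.Adj p.2 q.2) := Iff.rfl

theorem strongProd_top_eq_lexProd_top (G : SimpleGraph V) :
    strongProd G (⊤ : SimpleGraph W) = lexProd G ⊤ := by
  ext ⟨a, b⟩ ⟨x, y⟩
  simp only [strongProd, lexProd_adj, top_adj]
  by_cases hb : b = y <;> tauto

def Iso.lexProdRight (G : SimpleGraph V) {H : SimpleGraph W} {H' : SimpleGraph W'}
    (e : H ≃g H') : lexProd G H ≃g lexProd G H' where
  toEquiv := (Equiv.refl V).prodCongr e.toEquiv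
  map_rel_iff' := by simp [e.map_adj_iff]

/-- Walk from `a` to a vertex outside its fibre; the first edge leaving the fibre is a
`G`-edge. -/
theorem exists_reachable_adj_fst_of_reachable_lexProd {G : SimpleGraph V} {H : SimpleGraph W}
    {c : V × W → α} {p q a : V × W} (hq : (monoGraph (lexProd G H) c).Reachable p q)
    (hpq : q.1 ≠ p.1) (ha : (monoGraph (lexProd G H) c).Reachable p a) :
    ∃ s, (monoGraph (lexProd G H) c).Reachable p s ∧ G.Adj a.1 s.1 := by
  classical
  obtain ⟨b, hab, hb⟩ : ∃ b, (monoGraph (lexProd G H) c).Reachable a b ∧ b.1 ≠ a.1 := by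
    by_cases hpa : p.1 = a.1
    · exact ⟨q, ha.symm.trans hq, hpa ▸ hpq⟩
    · exact ⟨p, ha.symm, hpa⟩
  obtain ⟨w⟩ := hab
  obtain ⟨d, hd, hd_fst, hd_snd⟩ := w.exists_boundary_dart {x | x.1 = a.1} rfl hb
  have hadj : G.Adj a.1 d.snd.1 := by
    rcases (monoGraph_adj.1 d.adj).1 with h | ⟨h, -⟩
    · rwa [← hd_fst]
    · exact absurd (hd_fst.symm.trans h).symm hd_snd
  exact ⟨d.snd, ha.trans (w.takeUntil _ (w.dart_snd_mem_support_of_mem_darts hd)).reachable,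
    hadj⟩

theorem IsClusteredColoring.lexProd_right [Finite V] [Finite W] {G : SimpleGraph V}
    {H : SimpleGraph W} (H' : SimpleGraph W) {t : ℕ} {c : V × W → α}
    (hc : IsClusteredColoring (lexProd G H) t c) (hW : Nat.card W ≤ t) :
    IsClusteredColoring (lexProd G H') t c := by
  rw [isClusteredColoring_iff_reachable] at hc ⊢
  intro p
  set C := {w | (monoGraph (lexProd G H') c).Reachable p w}
  by_cases hfibre : ∀ q ∈ C, q.1 = p.1
  · calc C.ncard ≤ (Set.univ : Set W).ncard :=
          Set.ncard_le_ncard_of_injOn Prod.snd (fun _ _ => trivial)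
            fun q hq r hr h => Prod.ext ((hfibre q hq).trans (hfibre r hr).symm) h
      _ ≤ t := by rwa [Set.ncard_univ]
  push Not at hfibre
  obtain ⟨q, hq, hpq⟩ := hfibre
  suffices C ⊆ {w | (monoGraph (lexProd G H) c).Reachable p w} from
    (Set.ncard_le_ncard this (Set.toFinite _)).trans (hc p)
  refine fun w hw => hw.of_adj_imp_reachable fun a b ha hab => ?_
  have hb : (monoGraph (lexProd G H') c).Reachable p b := ha.trans hab.reachable
  rcases monoGraph_adj.1 hab with ⟨hG | ⟨hfst, -⟩, hcol⟩
  · exact (monoGraph_adj.2 ⟨Or.inl hG, hcol⟩ : (monoGraph (lexProd G H) c).Adj a b).reachable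
  -- an edge inside a fibre is replaced by a path through a neighbouring fibre
  obtain ⟨s, hs, has⟩ := exists_reachable_adj_fst_of_reachable_lexProd hq hpq ha
  have hcs : c s = c p := monoGraph.apply_eq_of_reachable hs
  have hca : c a = c p := monoGraph.apply_eq_of_reachable ha
  have hcb : c b = c p := monoGraph.apply_eq_of_reachable hb
  have h₁ : (monoGraph (lexProd G H) c).Adj a s := ⟨Or.inl has, hca.trans hcs.symm⟩
  have h₂ : (monoGraph (lexProd G H) c).Adj s b :=
    ⟨Or.inl (hfst ▸ has.symm), hcs.trans hcb.symm⟩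
  exact h₁.reachable.trans h₂.reachable

theorem clusteredChromaticNumber_lexProd_eq [Finite V] [Finite W] (G : SimpleGraph V)
    (H H' : SimpleGraph W) {t : ℕ} (hW : Nat.card W ≤ t) :
    clusteredChromaticNumber (lexProd G H) t = clusteredChromaticNumber (lexProd G H') t := by
  unfold clusteredChromaticNumber
  congr 1
  ext n
  exact ⟨fun ⟨c, hc⟩ => ⟨c, hc.lexProd_right H' hW⟩,
    fun ⟨c, hc⟩ => ⟨c, hc.lexProd_right H hW⟩⟩

end ImproperPaper

open ImproperPaper in

theorem stmt_9 {V W : Type*} [Fintype V] [Fintype W] (G : SimpleGraph V)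
    (H : SimpleGraph W) (k t : ℕ) (hk : Fintype.card W = k) (hkt : k ≤ t) :
    clusteredChromaticNumber (lexProd G H) t =
      clusteredChromaticNumber (strongProd G (⊤ : SimpleGraph (Fin k))) t := by
  calc clusteredChromaticNumber (lexProd G H) t
      = clusteredChromaticNumber (lexProd G (⊤ : SimpleGraph W)) t :=
        clusteredChromaticNumber_lexProd_eq G H ⊤ (by rwa [Nat.card_eq_fintype_card, hk])
    _ = clusteredChromaticNumber (lexProd G (⊤ : SimpleGraph (Fin k))) t :=
        clusteredChromaticNumber_congr
          (Iso.lexProdRight G (Iso.completeGraph (Fintype.equivFinOfCardEq hk))) t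
    _ = clusteredChromaticNumber (strongProd G (⊤ : SimpleGraph (Fin k))) t := by
        rw [strongProd_top_eq_lexProd_top]
end

section
/- For every finite simple graph G and all positive integers t and ℓ, the ℓ-clustered chromatic number of G equals the ℓt-clustered chromatic number of the strong product of G with K_t: χ^{\underline{ℓ}}(G) = χ^{\underline{ℓt}}(G ⊠ K_t). In particular, taking ℓ = 1, χ(G) = χ^{\underline{t}}(G ⊠ K_t) for every positive integer t. -/
open SimpleGraph Finset Matrix

/-
Blow each vertex `v` of `G` up into the clique `{v} × W` of `G ⊠ K_W`. Colouring every copy of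
`v` like `v` multiplies cluster sizes by at most `|W|`. Conversely, in an `ℓ|W|`-clustered
colouring of `G ⊠ K_W` each monochromatic component has room for `ℓ` slots, and by Hall's
theorem every `v` can be assigned one of its copies together with a slot in that copy's
component, with no slot used twice. Colour `v` like its chosen copy: adjacent equally coloured
vertices of `G` have chosen copies that are adjacent in `G ⊠ K_W`, hence lie in the same
component, so a monochromatic component of `G` fits into the `ℓ` slots of a single component of
`G ⊠ K_W`.
-/

namespace ImproperPaper

open Relation

variable {V W α : Type*}

def monoComponent (G : SimpleGraph V) (c : V → α) (v : V) : Set V :=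
  {w | ReflTransGen (fun a b => G.Adj a b ∧ c a = c b) v w}

section monoComponent

variable {G : SimpleGraph V} {c : V → α} {v w : V}

theorem mem_monoComponent_self : v ∈ monoComponent G c v := ReflTransGen.refl

theorem monoComponent_eq_of_mem (h : w ∈ monoComponent G c v) :
    monoComponent G c w = monoComponent G c v := by
  have : Std.Symm fun a b => G.Adj a b ∧ c a = c b :=
    ⟨fun _ _ hab => ⟨hab.1.symm, hab.2.symm⟩⟩
  ext u
  exact ⟨h.trans, (Std.Symm.symm _ _ h).trans⟩

theorem monoComponent_eq_of_adj (hadj : G.Adj v w) (hc : c v = c w) :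
    monoComponent G c w = monoComponent G c v :=
  monoComponent_eq_of_mem (ReflTransGen.single ⟨hadj, hc⟩)

end monoComponent

-- Without finiteness this fails: `Set.ncard` of an infinite component is `0`.
theorem isClusteredColoring_one_iff [Finite V] {G : SimpleGraph V} {c : V → α} :
    IsClusteredColoring G 1 c ↔ ∀ u v, G.Adj u v → c u ≠ c v := by
  constructor
  · intro hc u v hadj hcol
    have hpair : ({u, v} : Set V) ⊆ monoComponent G c u := by
      rintro w (rfl | rfl)
      · exact mem_monoComponent_self
      · exact ReflTransGen.single ⟨hadj, hcol⟩
    have := (Set.ncard_le_ncard hpair).trans (hc u)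
    rw [Set.ncard_pair hadj.ne] at this
    omega
  · intro hc v
    have hsingle : monoComponent G c v = {v} := by
      refine Set.eq_singleton_iff_unique_mem.2 ⟨mem_monoComponent_self, fun w hw => ?_⟩
      induction hw with
      | refl => rfl
      | tail _ hstep => exact absurd hstep.2 (hc _ _ hstep.1)
    exact (congrArg Set.ncard hsingle).trans_le (Set.ncard_singleton v).le

theorem chromNum_eq_clusteredChromaticNumber_one [Finite V] (G : SimpleGraph V) :
    chromNum G = clusteredChromaticNumber G 1 := by
  unfold chromNum clusteredChromaticNumber
  simp only [isClusteredColoring_one_iff]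

theorem monoComponent_strongProd_comp_fst_subset {G : SimpleGraph V} {H : SimpleGraph W}
    {c : V → α} (p : V × W) :
    monoComponent (strongProd G H) (c ∘ Prod.fst) p ⊆ monoComponent G c p.1 ×ˢ Set.univ := by
  intro q hq
  refine ⟨ReflTransGen.lift' Prod.fst (fun a b ⟨hadj, hcol⟩ => ?_) _ _ hq, trivial⟩
  rcases hadj with ⟨heq, _⟩ | ⟨hadj, _⟩ | ⟨hadj, _⟩
  · rw [Function.onFun, heq]
  · exact ReflTransGen.single ⟨hadj, hcol⟩
  · exact ReflTransGen.single ⟨hadj, hcol⟩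

theorem IsClusteredColoring.comp_fst [Finite V] [Finite W] {G : SimpleGraph V}
    {H : SimpleGraph W} {l : ℕ} {c : V → α} (hc : IsClusteredColoring G l c) :
    IsClusteredColoring (strongProd G H) (l * Nat.card W) (c ∘ Prod.fst) := fun p =>
  calc (monoComponent (strongProd G H) (c ∘ Prod.fst) p).ncard
      ≤ (monoComponent G c p.1 ×ˢ (Set.univ : Set W)).ncard :=
        Set.ncard_le_ncard (monoComponent_strongProd_comp_fst_subset p)
    _ = (monoComponent G c p.1).ncard * Nat.card W := by rw [Set.ncard_prod, Set.ncard_univ]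
    _ ≤ l * Nat.card W := Nat.mul_le_mul_right _ (hc p.1)

/- Hall's theorem, where `v` may choose any pair (block `K (v, i)`, slot in `Fin l`): a set `s`
meets at least `#s / l` blocks, since `s × W` is covered by blocks of size at most `l |W|`. -/
theorem exists_index_slot_injective [Finite W] [Nonempty W] [DecidableEq V] [DecidableEq W]
    {l : ℕ} (K : V × W → Finset (V × W)) (hmem : ∀ p, p ∈ K p)
    (hcard : ∀ p, #(K p) ≤ l * Nat.card W) :
    ∃ (i : V → W) (j : V → Fin l), Function.Injective fun v => (K (v, i v), j v) := by
  have := Fintype.ofFinite W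
  let blocks : V → Finset (Finset (V × W)) := fun v => univ.image fun i => K (v, i)
  have hall (s : Finset V) :
      #s ≤ #(s.biUnion fun v => blocks v ×ˢ (univ : Finset (Fin l))) := by
    have hpairs : (s.biUnion fun v => blocks v ×ˢ (univ : Finset (Fin l))) =
        s.biUnion blocks ×ˢ univ := by
      ext
      simp only [mem_biUnion, mem_product, mem_univ, and_true]
    rw [hpairs, card_product, card_univ, Fintype.card_fin]
    have hcover : s ×ˢ (univ : Finset W) ⊆ (s.biUnion blocks).biUnion id := fun p hp =>
      mem_biUnion.2 ⟨K p, mem_biUnion.2 ⟨p.1, (mem_product.1 hp).1,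
        mem_image_of_mem _ (mem_univ _)⟩, hmem p⟩
    have hcount : #s * Nat.card W ≤ #(s.biUnion blocks) * l * Nat.card W := by
      calc #s * Nat.card W = #(s ×ˢ (univ : Finset W)) := by
            rw [card_product, card_univ, Nat.card_eq_fintype_card]
        _ ≤ #((s.biUnion blocks).biUnion id) := card_le_card hcover
        _ ≤ #(s.biUnion blocks) * (l * Nat.card W) :=
          card_biUnion_le_card_mul _ _ _ fun B hB => by
            obtain ⟨v, -, hv⟩ := mem_biUnion.1 hB
            obtain ⟨i, -, rfl⟩ := mem_image.1 hv
            exact hcard _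
        _ = #(s.biUnion blocks) * l * Nat.card W := (mul_assoc _ _ _).symm
    exact Nat.le_of_mul_le_mul_right hcount Nat.card_pos
  obtain ⟨f, hfinj, hfmem⟩ := (all_card_le_biUnion_card_iff_exists_injective _).1 hall
  have hindex (v : V) : ∃ i, K (v, i) = (f v).1 := by
    obtain ⟨i, -, hi⟩ := mem_image.1 (mem_product.1 (hfmem v)).1
    exact ⟨i, hi⟩
  choose i hi using hindex
  exact ⟨i, fun v => (f v).2, fun u v huv => hfinj (by simpa only [hi] using huv)⟩

theorem exists_isClusteredColoring_of_strongProd_top [Finite V] [Finite W] [Nonempty W]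
    {G : SimpleGraph V} {l : ℕ} {c' : V × W → α}
    (hc' : IsClusteredColoring (strongProd G (⊤ : SimpleGraph W)) (l * Nat.card W) c') :
    ∃ c : V → α, IsClusteredColoring G l c := by
  classical
  set H := strongProd G (⊤ : SimpleGraph W)
  let K : V × W → Finset (V × W) := fun p => (monoComponent H c' p).toFinite.toFinset
  obtain ⟨i, j, hinj⟩ := exists_index_slot_injective K
    (fun p => (Set.Finite.mem_toFinset _).2 mem_monoComponent_self)
    (fun p => (Set.ncard_eq_toFinset_card _ _).symm.trans_le (hc' p))
  refine ⟨fun v => c' (v, i v), fun v => ?_⟩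
  have hblock_eq : ∀ w ∈ monoComponent G (fun v => c' (v, i v)) v, K (w, i w) = K (v, i v) := by
    intro w hw
    induction hw with
    | refl => rfl
    | @tail u u' _ hstep ih =>
      rw [← ih]
      refine Finset.coe_injective ?_
      simp only [K, Set.Finite.coe_toFinset]
      refine monoComponent_eq_of_adj ?_ hstep.2
      by_cases hi : i u = i u'
      · exact Or.inr (Or.inl ⟨hstep.1, hi⟩)
      · exact Or.inr (Or.inr ⟨hstep.1, hi⟩)
  have hslot_inj : Set.InjOn j (monoComponent G (fun v => c' (v, i v)) v) :=
    fun a ha b hb hab => hinj (Prod.ext ((hblock_eq a ha).trans (hblock_eq b hb).symm) hab)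
  calc (monoComponent G (fun v => c' (v, i v)) v).ncard
      = (j '' monoComponent G (fun v => c' (v, i v)) v).ncard := (hslot_inj.ncard_image).symm
    _ ≤ Nat.card (Fin l) := Set.ncard_le_card _
    _ = l := Nat.card_fin l

theorem clusteredChromaticNumber_strongProd_top [Finite V] [Finite W] [Nonempty W]
    (G : SimpleGraph V) (l : ℕ) :
    clusteredChromaticNumber (strongProd G (⊤ : SimpleGraph W)) (l * Nat.card W) =
      clusteredChromaticNumber G l := by
  unfold clusteredChromaticNumber
  congr 1
  ext n
  exact ⟨fun ⟨_, hc'⟩ => exists_isClusteredColoring_of_strongProd_top hc',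
    fun ⟨c, hc⟩ => ⟨c ∘ Prod.fst, hc.comp_fst⟩⟩

end ImproperPaper

open ImproperPaper in

theorem stmt_19_general {V : Type*} [Fintype V] (G : SimpleGraph V) (t l : ℕ) (ht : 0 < t) :
    clusteredChromaticNumber G l =
        clusteredChromaticNumber (strongProd G (⊤ : SimpleGraph (Fin t))) (l * t) ∧
      chromNum G = clusteredChromaticNumber (strongProd G (⊤ : SimpleGraph (Fin t))) t := by
  have : Nonempty (Fin t) := ⟨⟨0, ht⟩⟩
  have hblowup (k : ℕ) := (Nat.card_fin t ▸ clusteredChromaticNumber_strongProd_top G k).symm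
  refine ⟨hblowup l, ?_⟩
  rw [chromNum_eq_clusteredChromaticNumber_one, hblowup 1, one_mul]

open ImproperPaper in
theorem stmt_19 {V : Type*} [Fintype V] (G : SimpleGraph V) (t l : ℕ) (ht : 0 < t)
    (hl : 0 < l) :
    clusteredChromaticNumber G l =
        clusteredChromaticNumber (strongProd G (⊤ : SimpleGraph (Fin t))) (l * t) ∧
      chromNum G = clusteredChromaticNumber (strongProd G (⊤ : SimpleGraph (Fin t))) t :=
  stmt_19_general G t l ht
end
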